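/- For every ℓ ≥ 1, every permutation of {1,…,k^ℓ} attainable from k^ℓ chips has at most (k^{2ℓ} − ℓ·k^{ℓ+1} + (ℓ−1)·k^ℓ)/4 inversions. -/

import Mathlib

/-- A firing step for `N` labeled chips on the infinite directed `k`-ary tree with
vertex set `{1, 2, 3, …}`, root `1`, where the `j`-th child (`1 ≤ j ≤ k`) of vertex `v`
is `k*(v-1)+j+1`.  A configuration assigns to each chip (element of `Fin N`,
representing labels `1,…,N`) a vertex.  A step picks `k` chips `t 0 < t 1 < ⋯ < t (k-1)`
all on a common vertex `v` and sends the `j`-th smallest to the `j`-th child. -/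
def FireStep (k N : ℕ) (c c' : Fin N → ℕ) : Prop :=
  ∃ (v : ℕ) (t : Fin k → Fin N),
    StrictMono t ∧
    (∀ j, c (t j) = v) ∧
    (∀ j : Fin k, c' (t j) = k * (v - 1) + (j : ℕ) + 2) ∧
    (∀ i : Fin N, (∀ j, i ≠ t j) → c' i = c i)

/-- Reachable from the initial configuration of `k^ℓ` chips all on the root. -/
def Reachable (k ℓ : ℕ) (c : Fin (k ^ ℓ) → ℕ) : Prop :=
  Relation.ReflTransGen (FireStep k (k ^ ℓ)) (fun _ => 1) c

/-- A configuration is stable if every vertex holds fewer than `k` chips. -/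
def Stable (k N : ℕ) (c : Fin N → ℕ) : Prop :=
  ∀ v : ℕ, (Finset.univ.filter (fun i => c i = v)).card < k

/-- `layerStart k m` is the leftmost (smallest-numbered) vertex on layer `m+1`;
the vertices of layer `m+1` read left to right are `layerStart k m + p` for `0 ≤ p < k^m`. -/
def layerStart (k : ℕ) : ℕ → ℕ
  | 0 => 1
  | m + 1 => k * (layerStart k m - 1) + 2

/-- `σ` is the permutation associated to some reachable stable configuration of `k^ℓ`
chips: `σ p` (0-based, representing label `σ p + 1`) is the chip on the `p`-th leftmost
vertex of layer `ℓ+1`. -/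
def Attainable (k ℓ : ℕ) (σ : Equiv.Perm (Fin (k ^ ℓ))) : Prop :=
  ∃ c : Fin (k ^ ℓ) → ℕ, Reachable k ℓ c ∧ Stable k (k ^ ℓ) c ∧
    ∀ p : Fin (k ^ ℓ), c (σ p) = layerStart k ℓ + (p : ℕ)

/-!
Fix a run of firing steps leading to the final configuration. Two distinct chips part ways
exactly once: at some vertex `v` they are fired, in the same step or in two different steps
from `v`, to two different children, and from then on they stay in disjoint subtrees, so their
final left-to-right order is the order of these two children. Hence ordered pairs of distinct
chips correspond bijectively to pairs of exits `(step, child)` from a common vertex towards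
different children.

A pair parting within a single step is never inverted, since a step sends smaller labels
further left; there are `n·k(k-1)` of them, where `k·n = ℓ·k^ℓ` because each step raises the
total depth of the chips by `k`. Among the other pairs, swapping the two children and swapping
the two chips turn an inverted pair into three non-inverted ones, so
`4·inv ≤ k^ℓ(k^ℓ-1) - n·k(k-1)`, which is the bound.
-/

theorem Finset.two_mul_card_le_card_of_injective {α : Type*} [DecidableEq α] {s t : Finset α}
    {f : α → α} (hf : Function.Injective f) (hst : s ⊆ t) (hft : ∀ a ∈ s, f a ∈ t)
    (hfs : ∀ a ∈ s, f a ∉ s) : 2 * s.card ≤ t.card := by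
  have hdisj : Disjoint s (s.image f) := by
    rw [Finset.disjoint_right]
    rintro _ hb
    obtain ⟨a, ha, rfl⟩ := Finset.mem_image.mp hb
    exact hfs a ha
  calc 2 * s.card = (s ∪ s.image f).card := by
        rw [Finset.card_union_of_disjoint hdisj, Finset.card_image_of_injective _ hf, two_mul]
    _ ≤ t.card := Finset.card_le_card (Finset.union_subset hst (Finset.image_subset_iff.mpr hft))

theorem Relation.ReflTransGen.exists_seq {α : Type*} {r : α → α → Prop} {a b : α}
    (h : Relation.ReflTransGen r a b) :
    ∃ (n : ℕ) (f : ℕ → α), f 0 = a ∧ f n = b ∧ ∀ s < n, r (f s) (f (s + 1)) := by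
  induction h with
  | refl => exact ⟨0, fun _ => a, rfl, rfl, by simp⟩
  | @tail b c _ hbc ih =>
    obtain ⟨n, f, h0, hn, hf⟩ := ih
    refine ⟨n + 1, Function.update f (n + 1) c, by simp [h0], by simp, fun s hs => ?_⟩
    rcases Nat.lt_succ_iff_lt_or_eq.mp hs with hs | rfl
    · rw [Function.update_of_ne (by omega), Function.update_of_ne (by omega)]
      exact hf s hs
    · simpa [hn] using hbc

namespace KaryTree

def child (k v j : ℕ) : ℕ := k * (v - 1) + j + 2

def parent (k u : ℕ) : ℕ := (u - 2) / k + 1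

def depth (k : ℕ) : ℕ → ℕ
  | 0 => 0
  | 1 => 0
  | u + 2 => depth k (parent k (u + 2)) + 1
termination_by u => u
decreasing_by have := Nat.div_le_self u k; simp only [parent, Nat.add_sub_cancel]; omega

variable {k : ℕ}

lemma depth_one : depth k 1 = 0 := by simp [depth]

lemma depth_eq_depth_parent_add_one {u : ℕ} (hu : 2 ≤ u) :
    depth k u = depth k (parent k u) + 1 := by
  obtain ⟨u, rfl⟩ := Nat.exists_eq_add_of_le' hu
  simp [depth]

lemma child_inj {v a b : ℕ} : child k v a = child k v b ↔ a = b := by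
  simp [child]

lemma child_lt_child {v a b : ℕ} : child k v a < child k v b ↔ a < b := by
  simp [child]

lemma parent_child {v j : ℕ} (hv : 1 ≤ v) (hj : j < k) : parent k (child k v j) = v := by
  rw [parent, child, Nat.add_sub_cancel, Nat.mul_add_div (by omega), Nat.div_eq_of_lt hj]
  omega

lemma depth_child {v j : ℕ} (hv : 1 ≤ v) (hj : j < k) :
    depth k (child k v j) = depth k v + 1 := by
  rw [depth_eq_depth_parent_add_one (by simp [child]), parent_child hv hj]

def IsAncestor (k u w : ℕ) : Prop :=
  depth k u ≤ depth k w ∧ (parent k)^[depth k w - depth k u] w = u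

lemma IsAncestor.refl (u : ℕ) : IsAncestor k u u := ⟨le_rfl, by simp⟩

lemma IsAncestor.depth_le {u w : ℕ} (h : IsAncestor k u w) : depth k u ≤ depth k w := h.1

lemma isAncestor_child {v j : ℕ} (hv : 1 ≤ v) (hj : j < k) : IsAncestor k v (child k v j) := by
  refine ⟨by rw [depth_child hv hj]; omega, ?_⟩
  rw [depth_child hv hj, Nat.add_sub_cancel_left, Function.iterate_one, parent_child hv hj]

lemma IsAncestor.trans {u v w : ℕ} (huv : IsAncestor k u v) (hvw : IsAncestor k v w) :
    IsAncestor k u w := by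
  refine ⟨huv.1.trans hvw.1, ?_⟩
  rw [show depth k w - depth k u = (depth k v - depth k u) + (depth k w - depth k v) by
    have := huv.1; have := hvw.1; omega, Function.iterate_add_apply, hvw.2, huv.2]

lemma IsAncestor.eq_of_depth_eq {u u' w : ℕ} (h : IsAncestor k u w) (h' : IsAncestor k u' w)
    (hd : depth k u = depth k u') : u = u' := by
  rw [← h.2, ← h'.2, hd]

lemma one_le_layerStart (m : ℕ) : 1 ≤ layerStart k m := by
  cases m <;> simp [layerStart]

lemma layerStart_succ_add (hk : 0 < k) (m p : ℕ) :
    layerStart k (m + 1) + p = child k (layerStart k m + p / k) (p % k) := by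
  have hL := one_le_layerStart (k := k) m
  obtain ⟨q, r, hr, rfl⟩ : ∃ q r, r < k ∧ p = k * q + r :=
    ⟨p / k, p % k, Nat.mod_lt p hk, (Nat.div_add_mod p k).symm⟩
  rw [Nat.mul_add_div hk, Nat.div_eq_of_lt hr, Nat.mul_add_mod, Nat.mod_eq_of_lt hr, layerStart,
    child, show layerStart k m + (q + 0) - 1 = (layerStart k m - 1) + q by omega, mul_add]
  omega

lemma depth_layerStart_add : ∀ m p, p < k ^ m → depth k (layerStart k m + p) = m
  | 0, p, hp => by
    obtain rfl : p = 0 := by simpa using hp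
    exact depth_one
  | m + 1, p, hp => by
    have hk : 0 < k := Nat.pos_of_ne_zero (by rintro rfl; simp at hp)
    rw [layerStart_succ_add hk, depth_child (le_add_right (one_le_layerStart m))
      (Nat.mod_lt p hk), depth_layerStart_add m (p / k)
      (Nat.div_lt_of_lt_mul (by rwa [← pow_succ']))]

lemma parent_iterate_layerStart_add :
    ∀ r m p, p < k ^ (m + r) →
      (parent k)^[r] (layerStart k (m + r) + p) = layerStart k m + p / k ^ r
  | 0, m, p, _ => by simp
  | r + 1, m, p, hp => by
    have hk : 0 < k := Nat.pos_of_ne_zero (by rintro rfl; simp at hp)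
    rw [Function.iterate_succ_apply, ← add_assoc, layerStart_succ_add hk,
      parent_child (le_add_right (one_le_layerStart _)) (Nat.mod_lt p hk),
      parent_iterate_layerStart_add r m (p / k)
        (Nat.div_lt_of_lt_mul (by rwa [← pow_succ', add_assoc])),
      Nat.div_div_eq_div_mul, pow_succ']

lemma IsAncestor.eq_layerStart_add {ℓ u p : ℕ} (hp : p < k ^ ℓ)
    (h : IsAncestor k u (layerStart k ℓ + p)) :
    u = layerStart k (depth k u) + p / k ^ (ℓ - depth k u) := by
  obtain ⟨hle, hu⟩ := h
  rw [depth_layerStart_add ℓ p hp] at hle hu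
  have hℓ : depth k u + (ℓ - depth k u) = ℓ := by omega
  have h := parent_iterate_layerStart_add (ℓ - depth k u) (depth k u) p (by rwa [hℓ])
  rw [hℓ] at h
  exact hu.symm.trans h

lemma lt_of_isAncestor_child {ℓ v a b px py : ℕ} (hv : 1 ≤ v) (hab : a < b) (hb : b < k)
    (hpx : px < k ^ ℓ) (hpy : py < k ^ ℓ) (hx : IsAncestor k (child k v a) (layerStart k ℓ + px))
    (hy : IsAncestor k (child k v b) (layerStart k ℓ + py)) : px < py := by
  have hlt := child_lt_child (k := k) (v := v) |>.mpr hab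
  rw [hx.eq_layerStart_add hpx, hy.eq_layerStart_add hpy, depth_child hv (hab.trans hb),
    depth_child hv hb] at hlt
  exact Nat.lt_of_div_lt_div (Nat.lt_of_add_lt_add_left hlt)

end KaryTree

open KaryTree

/-- A sequence of `n` firing steps on `M` labeled chips, step `s` sending the chips
`fired s 0 < ⋯ < fired s (k-1)` from `vertex s` to its children. Only `config t` for `t ≤ n`
is meaningful: it is the configuration after `t` steps. -/
structure FiringHistory (k M : ℕ) where
  n : ℕ
  config : ℕ → Fin M → ℕ
  vertex : Fin n → ℕ
  fired : Fin n → Fin k → Fin M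
  config_zero : config 0 = fun _ => 1
  fired_strictMono : ∀ s, StrictMono (fired s)
  config_fired : ∀ (s : Fin n) j, config s (fired s j) = vertex s
  config_succ_fired : ∀ (s : Fin n) j, config (s + 1) (fired s j) = child k (vertex s) j
  config_succ_of_forall_ne :
    ∀ (s : Fin n) i, (∀ j, i ≠ fired s j) → config (s + 1) i = config s i

theorem exists_firingHistory {k M : ℕ} {c : Fin M → ℕ}
    (h : Relation.ReflTransGen (FireStep k M) (fun _ => 1) c) :
    ∃ H : FiringHistory k M, H.config H.n = c := by
  obtain ⟨n, f, h0, hn, hf⟩ := h.exists_seq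
  choose v t hmono hat hfire hstay using fun s : Fin n => hf s s.isLt
  exact ⟨⟨n, f, v, t, h0, hmono, hat, hfire, hstay⟩, hn⟩

namespace FiringHistory

open Finset

section

variable {k M : ℕ} (H : FiringHistory k M)

/-- A firing event of a single chip: a step together with the child the chip is sent to. -/
abbrev Exit : Type := Fin H.n × Fin k

def chip (e : H.Exit) : Fin M := H.fired e.1 e.2

lemma config_chip (e : H.Exit) : H.config e.1 (H.chip e) = H.vertex e.1 :=
  H.config_fired e.1 e.2

lemma config_succ_chip (e : H.Exit) :
    H.config (e.1 + 1) (H.chip e) = child k (H.vertex e.1) e.2 :=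
  H.config_succ_fired e.1 e.2

lemma config_succ (s : Fin H.n) (i : Fin M) :
    H.config (s + 1) i = H.config s i ∨ ∃ j, H.chip (s, j) = i := by
  by_cases h : ∃ j, H.fired s j = i
  · exact Or.inr h
  · exact Or.inl (H.config_succ_of_forall_ne s i fun j hj => h ⟨j, hj.symm⟩)

lemma one_le_config {t : ℕ} (ht : t ≤ H.n) (i : Fin M) : 1 ≤ H.config t i := by
  induction t with
  | zero => simp [H.config_zero]
  | succ t ih =>
    rcases H.config_succ ⟨t, ht⟩ i with h | ⟨j, rfl⟩
    · exact h ▸ ih (by omega)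
    · rw [H.config_succ_chip (⟨t, ht⟩, j)]
      simp [child]

lemma one_le_vertex (e : H.Exit) : 1 ≤ H.vertex e.1 :=
  H.config_chip e ▸ H.one_le_config e.1.isLt.le _

lemma isAncestor_config {t t' : ℕ} (htt' : t ≤ t') (ht' : t' ≤ H.n) (i : Fin M) :
    IsAncestor k (H.config t i) (H.config t' i) := by
  induction t', htt' using Nat.le_induction with
  | base => exact .refl _
  | succ t' _ ih =>
    refine (ih (by omega)).trans ?_
    rcases H.config_succ ⟨t', ht'⟩ i with h | ⟨j, rfl⟩
    · exact h ▸ .refl _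
    · rw [H.config_succ_chip (⟨t', ht'⟩, j), ← H.config_chip (⟨t', ht'⟩, j)]
      exact isAncestor_child (H.one_le_config (by omega) _) j.isLt

lemma isAncestor_child_vertex {e e' : H.Exit} (h : H.chip e = H.chip e') (hlt : e.1 < e'.1) :
    IsAncestor k (child k (H.vertex e.1) e.2) (H.vertex e'.1) := by
  have := H.isAncestor_config (Nat.succ_le_of_lt hlt) e'.1.isLt.le (H.chip e)
  rwa [H.config_succ_chip, h, H.config_chip] at this

lemma depth_vertex_lt {e e' : H.Exit} (h : H.chip e = H.chip e') (hlt : e.1 < e'.1) :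
    depth k (H.vertex e.1) < depth k (H.vertex e'.1) := by
  have := (H.isAncestor_child_vertex h hlt).depth_le
  rw [depth_child (H.one_le_vertex e) e.2.isLt] at this
  omega

lemma eq_of_chip_eq_of_vertex_eq {e e' : H.Exit} (h : H.chip e = H.chip e')
    (hv : H.vertex e.1 = H.vertex e'.1) : e = e' := by
  have hs : e.1 = e'.1 := by
    rcases lt_trichotomy e.1 e'.1 with hlt | hs | hlt
    · exact absurd (congrArg (depth k) hv) (H.depth_vertex_lt h hlt).ne
    · exact hs
    · exact absurd (congrArg (depth k) hv) (H.depth_vertex_lt h.symm hlt).ne'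
  obtain ⟨s, a⟩ := e
  obtain ⟨s', b⟩ := e'
  obtain rfl : s = s' := hs
  exact Prod.ext rfl ((H.fired_strictMono s).injective h)

def Splits (e e' : H.Exit) : Prop := H.vertex e.1 = H.vertex e'.1 ∧ e.2 ≠ e'.2

instance : DecidableRel H.Splits := fun _ _ => inferInstanceAs (Decidable (_ ∧ _))

variable {H}

lemma Splits.symm {e e' : H.Exit} (h : H.Splits e e') : H.Splits e' e := ⟨h.1.symm, h.2.symm⟩

lemma Splits.chip_ne {e e' : H.Exit} (h : H.Splits e e') : H.chip e ≠ H.chip e' :=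
  fun hc => h.2 (congrArg Prod.snd (H.eq_of_chip_eq_of_vertex_eq hc h.1))

/-- After parting at the earlier step the chips lie in disjoint subtrees and never meet again. -/
lemma Splits.not_lt_of_chip_eq {e₁ e₁' e₂ e₂' : H.Exit} (h₁ : H.Splits e₁ e₁')
    (h₂ : H.Splits e₂ e₂') (hx : H.chip e₁ = H.chip e₂) (hy : H.chip e₁' = H.chip e₂') :
    ¬ e₁.1 < e₂.1 := by
  intro hlt
  have hd := H.depth_vertex_lt hx hlt
  rw [h₁.1, h₂.1] at hd
  have hlt' : e₁'.1 < e₂'.1 := by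
    rcases lt_trichotomy e₁'.1 e₂'.1 with h | h | h
    · exact h
    · rw [h] at hd
      exact absurd hd (lt_irrefl _)
    · exact absurd (H.depth_vertex_lt hy.symm h) hd.not_gt
  have hv := H.one_le_vertex e₁
  have hxa := H.isAncestor_child_vertex hx hlt
  have hya := H.isAncestor_child_vertex hy hlt'
  rw [← h₁.1, ← h₂.1] at hya
  refine h₁.2 (Fin.ext (child_inj.mp (hxa.eq_of_depth_eq hya ?_)))
  rw [depth_child hv e₁.2.isLt, depth_child hv e₁'.2.isLt]

lemma Splits.eq_of_chip_eq {e₁ e₁' e₂ e₂' : H.Exit} (h₁ : H.Splits e₁ e₁')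
    (h₂ : H.Splits e₂ e₂') (hx : H.chip e₁ = H.chip e₂) (hy : H.chip e₁' = H.chip e₂') :
    e₁ = e₂ ∧ e₁' = e₂' := by
  have hs : e₁.1 = e₂.1 := le_antisymm (not_lt.mp (h₂.not_lt_of_chip_eq h₁ hx.symm hy.symm))
    (not_lt.mp (h₁.not_lt_of_chip_eq h₂ hx hy))
  exact ⟨H.eq_of_chip_eq_of_vertex_eq hx (by rw [hs]),
    H.eq_of_chip_eq_of_vertex_eq hy (by rw [← h₁.1, ← h₂.1, hs])⟩

variable (H)

lemma exists_chip_eq_of_config_ne {x : Fin M} {t : ℕ} (ht : t ≤ H.n)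
    (hx : H.config H.n x ≠ H.config t x) :
    ∃ e : H.Exit, H.chip e = x ∧ H.vertex e.1 = H.config t x := by
  suffices ∀ t', t ≤ t' → t' ≤ H.n → H.config t' x ≠ H.config t x →
      ∃ e : H.Exit, H.chip e = x ∧ H.vertex e.1 = H.config t x from this _ ht le_rfl hx
  intro t' htt'
  induction t', htt' using Nat.le_induction with
  | base => exact fun _ h => absurd rfl h
  | succ t' _ ih =>
    intro ht' hne
    by_cases hw : H.config t' x = H.config t x
    · rcases H.config_succ ⟨t', ht'⟩ x with h | ⟨j, hj⟩
      · exact absurd (h.trans hw) hne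
      · exact ⟨(⟨t', ht'⟩, j), hj, by rw [← hw, ← H.config_chip, hj]⟩
    · exact ih (by omega) hw

lemma exists_splits {ℓ : ℕ} (hdepth : ∀ i, depth k (H.config H.n i) = ℓ) {x y : Fin M}
    (hxy : H.config H.n x ≠ H.config H.n y) :
    ∃ e e' : H.Exit, H.Splits e e' ∧ H.chip e = x ∧ H.chip e' = y := by
  suffices ∀ d t t', depth k (H.config t x) + d = ℓ → t ≤ H.n → t' ≤ H.n →
      H.config t x = H.config t' y →
        ∃ e e' : H.Exit, H.Splits e e' ∧ H.chip e = x ∧ H.chip e' = y from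
    this ℓ 0 0 (by simp [H.config_zero, depth_one]) (Nat.zero_le _) (Nat.zero_le _)
      (by simp [H.config_zero])
  intro d
  induction d with
  | zero =>
    intro t t' hd ht ht' hw
    have hx := H.isAncestor_config ht le_rfl x
    have hy := H.isAncestor_config ht' le_rfl y
    rw [hw] at hx hd
    refine absurd ((hx.eq_of_depth_eq (.refl _) ?_).symm.trans
      (hy.eq_of_depth_eq (.refl _) ?_)) hxy <;> rw [hdepth] <;> omega
  | succ d ih =>
    intro t t' hd ht ht' hw
    have hne : ∀ i, depth k (H.config H.n i) ≠ depth k (H.config t x) := by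
      intro i; rw [hdepth]; omega
    obtain ⟨e, rfl, hv⟩ := H.exists_chip_eq_of_config_ne ht fun h => hne x (congrArg _ h)
    obtain ⟨e', rfl, hv'⟩ := H.exists_chip_eq_of_config_ne ht' fun h => hne y (by rw [h, hw])
    by_cases hj : e.2 = e'.2
    · refine ih (e.1 + 1) (e'.1 + 1) ?_ e.1.isLt e'.1.isLt ?_
      · rw [H.config_succ_chip, depth_child (H.one_le_vertex e) e.2.isLt, hv]
        omega
      · rw [H.config_succ_chip, H.config_succ_chip, hv, hv', hw, hj]
    · exact ⟨e, e', ⟨hv.trans (hw.trans hv'.symm), hj⟩, rfl, rfl⟩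

variable {H}

lemma Splits.lt_of_lt {ℓ : ℕ} {pos : Fin M → ℕ}
    (hpos : ∀ i, H.config H.n i = layerStart k ℓ + pos i) (hpos_lt : ∀ i, pos i < k ^ ℓ)
    {e e' : H.Exit} (h : H.Splits e e') (hlt : e.2 < e'.2) :
    pos (H.chip e) < pos (H.chip e') := by
  have hx := H.isAncestor_config e.1.isLt le_rfl (H.chip e)
  have hy := H.isAncestor_config e'.1.isLt le_rfl (H.chip e')
  rw [H.config_succ_chip, hpos] at hx
  rw [H.config_succ_chip, hpos, ← h.1] at hy
  exact lt_of_isAncestor_child (H.one_le_vertex e) hlt e'.2.isLt (hpos_lt _) (hpos_lt _) hx hy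

variable (H)

lemma depth_config_succ (s : Fin H.n) (i : Fin M) :
    depth k (H.config (s + 1) i) =
      depth k (H.config s i) + if i ∈ univ.image (H.fired s) then 1 else 0 := by
  split_ifs with hi
  · obtain ⟨j, -, rfl⟩ := mem_image.mp hi
    rw [H.config_succ_fired, ← H.config_fired s j,
      depth_child (H.one_le_config s.isLt.le _) j.isLt]
  · rw [H.config_succ_of_forall_ne s i fun j hj => hi (hj ▸ mem_image_of_mem _ (mem_univ j)),
      add_zero]

lemma sum_depth_config {t : ℕ} (ht : t ≤ H.n) : ∑ i, depth k (H.config t i) = k * t := by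
  induction t with
  | zero => simp [H.config_zero, depth_one]
  | succ t ih =>
    rw [sum_congr rfl fun i _ => H.depth_config_succ ⟨t, ht⟩ i, sum_add_distrib,
      ih (by omega), sum_boole, filter_univ_mem,
      card_image_of_injective _ (H.fired_strictMono _).injective, card_univ,
      Fintype.card_fin, Nat.cast_id, mul_add_one]

def splitPairs : Finset (H.Exit × H.Exit) := univ.filter fun p => H.Splits p.1 p.2

lemma card_splitPairs {ℓ : ℕ} (hdepth : ∀ i, depth k (H.config H.n i) = ℓ)
    (hinj : Function.Injective (H.config H.n)) : #H.splitPairs = M * M - M := by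
  calc #H.splitPairs = #(univ : Finset (Fin M)).offDiag := by
        refine card_bij (fun p _ => (H.chip p.1, H.chip p.2)) ?_ ?_ ?_
        · intro p hp
          simpa [splitPairs] using (mem_filter.mp hp).2.chip_ne
        · intro p hp q hq hpq
          simp only [splitPairs, mem_filter, Prod.mk.injEq] at hp hq hpq
          have := hp.2.eq_of_chip_eq hq.2 hpq.1 hpq.2
          exact Prod.ext this.1 this.2
        · rintro ⟨x, y⟩ hxy
          obtain ⟨e, e', h, rfl, rfl⟩ :=
            H.exists_splits hdepth (hinj.ne (mem_offDiag.mp hxy).2.2)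
          exact ⟨(e, e'), by simpa [splitPairs] using h, rfl⟩
    _ = M * M - M := by simp [offDiag_card]

lemma card_splitPairs_filter_fst_eq :
    #(H.splitPairs.filter fun p => p.1.1 = p.2.1) = H.n * (k * k - k) := by
  calc _ = #((univ : Finset (Fin H.n)) ×ˢ (univ : Finset (Fin k)).offDiag) := by
        refine card_bij' (fun p _ => (p.1.1, p.1.2, p.2.2))
          (fun q _ => ((q.1, q.2.1), (q.1, q.2.2))) ?_ ?_ ?_ ?_ <;>
          simp +contextual [splitPairs] <;> simp +contextual [Splits]
    _ = H.n * (k * k - k) := by simp [offDiag_card]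

def inversions : Finset (H.Exit × H.Exit) :=
  H.splitPairs.filter fun p => H.chip p.1 < H.chip p.2 ∧ p.2.2 < p.1.2

lemma chip_lt_chip_iff {s : Fin H.n} {a b : Fin k} : H.chip (s, a) < H.chip (s, b) ↔ a < b :=
  (H.fired_strictMono s).lt_iff_lt

/-- Swapping the children of an inverted pair and swapping its two chips produce three more
pairs split at different steps, none of them inverted. -/
lemma four_mul_card_inversions_le :
    4 * #H.inversions ≤ #(H.splitPairs.filter fun p => p.1.1 ≠ p.2.1) := by
  set A := H.splitPairs.filter fun p => p.1.1 ≠ p.2.1 ∧ H.chip p.1 < H.chip p.2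
  have hcross : ∀ p ∈ H.inversions, p.1.1 ≠ p.2.1 := by
    rintro ⟨⟨s, a⟩, ⟨s', b⟩⟩ hp (rfl : s = s')
    simp only [inversions, mem_filter] at hp
    exact hp.2.1.not_gt (H.chip_lt_chip_iff.mpr hp.2.2)
  have hswap : 2 * #H.inversions ≤ #A := by
    refine two_mul_card_le_card_of_injective (f := fun p => ((p.1.1, p.2.2), (p.2.1, p.1.2)))
      (Function.Involutive.injective fun _ => rfl) ?_ ?_ ?_
    · intro p hp
      have hne := hcross p hp
      simp only [A, inversions, mem_filter] at hp ⊢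
      exact ⟨hp.1, hne, hp.2.1⟩
    · rintro ⟨⟨s, a⟩, ⟨s', b⟩⟩ hp
      have hne := hcross _ hp
      simp only [A, inversions, splitPairs, mem_filter, mem_univ, true_and] at hp ⊢
      obtain ⟨⟨hv, -⟩, hlt, hba⟩ := hp
      exact ⟨⟨hv, hba.ne⟩, hne,
        (H.chip_lt_chip_iff.mpr hba).trans (hlt.trans (H.chip_lt_chip_iff.mpr hba))⟩
    · rintro ⟨⟨s, a⟩, ⟨s', b⟩⟩ hp
      simp only [inversions, mem_filter] at hp ⊢
      exact fun h => lt_asymm h.2.2 hp.2.2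
  have hrev : 2 * #A ≤ #(H.splitPairs.filter fun p => p.1.1 ≠ p.2.1) := by
    refine two_mul_card_le_card_of_injective Prod.swap_injective ?_ ?_ ?_
    · intro p hp
      simp only [A, mem_filter] at hp ⊢
      exact ⟨hp.1, hp.2.1⟩
    · intro p hp
      simp only [A, splitPairs, mem_filter, mem_univ, true_and] at hp ⊢
      exact ⟨hp.1.symm, Ne.symm hp.2.1⟩
    · intro p hp
      simp only [A, mem_filter, Prod.fst_swap, Prod.snd_swap, not_and] at hp ⊢
      exact fun _ _ => hp.2.2.not_gt
  omega

end

section Layer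

variable {k ℓ : ℕ} (H : FiringHistory k (k ^ ℓ)) {σ : Equiv.Perm (Fin (k ^ ℓ))}

lemma depth_config_n (hσ : ∀ i, H.config H.n i = layerStart k ℓ + σ.symm i)
    (i : Fin (k ^ ℓ)) :
    depth k (H.config H.n i) = ℓ := by
  rw [hσ]
  exact depth_layerStart_add ℓ _ (σ.symm i).isLt

lemma config_n_injective (hσ : ∀ i, H.config H.n i = layerStart k ℓ + σ.symm i) :
    Function.Injective (H.config H.n) := fun i j h => by
  simpa [hσ, Fin.val_inj] using h

lemma mul_n_eq (hσ : ∀ i, H.config H.n i = layerStart k ℓ + σ.symm i) :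
    k * H.n = k ^ ℓ * ℓ := by
  rw [← H.sum_depth_config le_rfl]
  simp [H.depth_config_n hσ, mul_comm]

lemma card_inversions_eq (hσ : ∀ i, H.config H.n i = layerStart k ℓ + σ.symm i) :
    #(univ.filter fun q : Fin (k ^ ℓ) × Fin (k ^ ℓ) => q.1 < q.2 ∧ σ q.2 < σ q.1) =
      #H.inversions := by
  have hpos_lt : ∀ i, (σ.symm i : ℕ) < k ^ ℓ := fun i => (σ.symm i).isLt
  symm
  refine card_bij (fun p _ => (σ.symm (H.chip p.2), σ.symm (H.chip p.1))) ?_ ?_ ?_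
  · rintro ⟨e, e'⟩ hp
    simp only [inversions, splitPairs, mem_filter, mem_univ, true_and] at hp ⊢
    exact ⟨hp.1.symm.lt_of_lt hσ hpos_lt hp.2.2, by simpa using hp.2.1⟩
  · rintro ⟨e₁, e₁'⟩ hp ⟨e₂, e₂'⟩ hq h
    simp only [inversions, splitPairs, mem_filter, mem_univ, true_and, Prod.mk.injEq,
      EmbeddingLike.apply_eq_iff_eq] at hp hq h
    have := hp.1.eq_of_chip_eq hq.1 h.2 h.1
    exact Prod.ext this.1 this.2
  · rintro ⟨q₁, q₂⟩ hq
    simp only [mem_filter, mem_univ, true_and] at hq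
    have hne : H.config H.n (σ q₂) ≠ H.config H.n (σ q₁) := by
      simpa [hσ, Fin.val_inj] using hq.1.ne'
    obtain ⟨e, e', h, he, he'⟩ := H.exists_splits (H.depth_config_n hσ) hne
    have hlt : e'.2 < e.2 := by
      rcases lt_trichotomy e.2 e'.2 with hlt | heq | hlt
      · have := h.lt_of_lt hσ hpos_lt hlt
        simp only [he, he', Equiv.symm_apply_apply] at this
        exact absurd this hq.1.not_gt
      · exact absurd heq h.2
      · exact hlt
    refine ⟨(e, e'), ?_, by simp [he, he']⟩
    simp [inversions, splitPairs, h, he, he', hq.2, hlt]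

theorem four_mul_card_inversions_add_le
    (hσ : ∀ i, H.config H.n i = layerStart k ℓ + σ.symm i) :
    4 * #(univ.filter fun q : Fin (k ^ ℓ) × Fin (k ^ ℓ) => q.1 < q.2 ∧ σ q.2 < σ q.1) +
      k ^ ℓ * ℓ * k + k ^ ℓ ≤ k ^ ℓ * k ^ ℓ + k ^ ℓ * ℓ := by
  have hinv := H.four_mul_card_inversions_le
  rw [H.card_inversions_eq hσ]
  have hsplit := card_filter_add_card_filter_not (s := H.splitPairs) (fun p => p.1.1 = p.2.1)
  rw [H.card_splitPairs (H.depth_config_n hσ) (H.config_n_injective hσ),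
    H.card_splitPairs_filter_fst_eq] at hsplit
  have hsteps : H.n * (k * k - k) + H.n * k = k ^ ℓ * ℓ * k := by
    rw [← mul_add, Nat.sub_add_cancel (Nat.le_mul_self k), ← mul_assoc, mul_comm H.n k,
      H.mul_n_eq hσ]
  have hn : H.n * k = k ^ ℓ * ℓ := by rw [mul_comm, H.mul_n_eq hσ]
  have hM := Nat.sub_add_cancel (Nat.le_mul_self (k ^ ℓ))
  simp only [ne_eq] at hinv
  omega

end Layer

end FiringHistory

theorem stmt8_general (k ℓ : ℕ)
    (σ : Equiv.Perm (Fin (k ^ ℓ))) (hσ : Attainable k ℓ σ) :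
    ((Finset.univ.filter (fun q : Fin (k ^ ℓ) × Fin (k ^ ℓ) =>
        q.1 < q.2 ∧ σ q.2 < σ q.1)).card : ℤ) ≤
      ((k : ℤ) ^ (2 * ℓ) - (ℓ : ℤ) * (k : ℤ) ^ (ℓ + 1) + ((ℓ : ℤ) - 1) * (k : ℤ) ^ ℓ) / 4 := by
  obtain ⟨c, hreach, -, hc⟩ := hσ
  obtain ⟨H, rfl⟩ := exists_firingHistory hreach
  have hbound := H.four_mul_card_inversions_add_le fun i => by simpa using hc (σ.symm i)
  rw [Int.le_ediv_iff_mul_le (by norm_num), pow_succ,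
    show (k : ℤ) ^ (2 * ℓ) = (k : ℤ) ^ ℓ * (k : ℤ) ^ ℓ by ring]
  linarith

/-- Every permutation attainable from `k^ℓ` chips has at most
`(k^(2ℓ) - ℓ·k^(ℓ+1) + (ℓ-1)·k^ℓ)/4` inversions. -/
theorem stmt8 (k ℓ : ℕ) (hk : 2 ≤ k) (hℓ : 1 ≤ ℓ)
    (σ : Equiv.Perm (Fin (k ^ ℓ))) (hσ : Attainable k ℓ σ) :
    ((Finset.univ.filter (fun q : Fin (k ^ ℓ) × Fin (k ^ ℓ) =>
        q.1 < q.2 ∧ σ q.2 < σ q.1)).card : ℤ) ≤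
      ((k : ℤ) ^ (2 * ℓ) - (ℓ : ℤ) * (k : ℤ) ^ (ℓ + 1) + ((ℓ : ℤ) - 1) * (k : ℤ) ^ ℓ) / 4 :=
  stmt8_general k ℓ σ hσ
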